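/- arXiv:2506.18578 — 6 statements merged into one kernel-verified Lean document; each statement's English description precedes it below -/
import Mathlib

section
/- For every binary matrix M and every linear branching B of the containment digraph D_M, the number of B-uncovered pairs equals the sum of the cardinalities of the maximal elements of B, i.e., |U(B)| = Σ_{v ∈ max B} |v|, where max B is the set of vertices with out-degree zero in B. -/
open Classical Finset

/-- The family of support sets of the columns of a binary matrix `M`:
the vertex set of the containment digraph `D_M`. -/
def suppFamily {m n : ℕ} (M : Matrix (Fin m) (Fin n) Bool) :
    Finset (Finset (Fin m)) :=
  Finset.univ.image fun j => Finset.univ.filter fun i => M i j = true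

/-- `B` is a branching of the containment digraph on the family `V`:
its arcs are proper inclusions between members of `V` and every vertex is
the tail of at most one arc. -/
def IsBranching {ρ : Type*} [DecidableEq ρ] (V : Finset (Finset ρ))
    (B : Finset (Finset ρ × Finset ρ)) : Prop :=
  (∀ p ∈ B, p.1 ∈ V ∧ p.2 ∈ V ∧ p.1 ⊂ p.2) ∧
  ∀ p ∈ B, ∀ q ∈ B, p.1 = q.1 → p.2 = q.2

/-- A branching is linear if every vertex is the head of at most one arc. -/
def IsLinear {ρ : Type*} [DecidableEq ρ]
    (B : Finset (Finset ρ × Finset ρ)) : Prop :=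
  ∀ p ∈ B, ∀ q ∈ B, p.2 = q.2 → p.1 = q.1

/-- `nuB B v` = number of rows of `v` uncovered in `v` with respect to `B`,
i.e. `|v \ ⋃_{u ∈ N_B^-(v)} u|`. -/
def nuB {ρ : Type*} [DecidableEq ρ] (B : Finset (Finset ρ × Finset ρ))
    (v : Finset ρ) : ℕ :=
  (v \ (B.filter fun p => p.2 = v).sup fun p => p.1).card

/-- The total number of `B`-uncovered pairs. -/
def uncov {ρ : Type*} [DecidableEq ρ] (V : Finset (Finset ρ))
    (B : Finset (Finset ρ × Finset ρ)) : ℕ :=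
  ∑ v ∈ V, nuB B v

/-- The uncovering number: minimum number of uncovered pairs over all
branchings. -/
noncomputable def beta {ρ : Type*} [DecidableEq ρ]
    (V : Finset (Finset ρ)) : ℕ :=
  sInf {k | ∃ B, IsBranching V B ∧ uncov V B = k}

/-- The linear uncovering number: minimum number of uncovered pairs over all
linear branchings. -/
noncomputable def betaL {ρ : Type*} [DecidableEq ρ]
    (V : Finset (Finset ρ)) : ℕ :=
  sInf {k | ∃ B, IsBranching V B ∧ IsLinear B ∧ uncov V B = k}

/-- A set of members of a family of sets is an antichain if its elements are
pairwise incomparable under inclusion. -/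
def IsAntichainFam {ρ : Type*} (X : Finset (Finset ρ)) : Prop :=
  ∀ u ∈ X, ∀ v ∈ X, u ≠ v → ¬ u ⊆ v ∧ ¬ v ⊆ u

/-- The width of (the containment digraph on) a family of finite sets. -/
noncomputable def widthFam {ρ : Type*} [DecidableEq ρ]
    (V : Finset (Finset ρ)) : ℕ :=
  (V.powerset.filter IsAntichainFam).sup Finset.card

/-- The maximum total cardinality of an antichain. -/
noncomputable def alphaW {ρ : Type*} [DecidableEq ρ]
    (V : Finset (Finset ρ)) : ℕ :=
  (V.powerset.filter IsAntichainFam).sup fun S => ∑ v ∈ S, v.card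

/-!
In a linear branching every vertex `v` has at most one in-neighbour `u ⊆ v`, so the number of
`B`-uncovered rows of `v` is `|v| - |u|`, or `|v|` if `v` is no head. Hence
`|U(B)| = Σ_v |v| - Σ_{(u,v) ∈ B} |u|`, and since every vertex is the tail of at most one arc the
subtracted sum is the total size of the vertices that are not maximal.
-/

theorem Finset.card_sup_eq_sum_card_of_card_le_one {ι α : Type*} [DecidableEq α]
    {s : Finset ι} (hs : s.card ≤ 1) (f : ι → Finset α) :
    (s.sup f).card = ∑ i ∈ s, (f i).card := by
  rcases Nat.le_one_iff_eq_zero_or_eq_one.mp hs with hs | hs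
  · simp [Finset.card_eq_zero.mp hs]
  · obtain ⟨a, rfl⟩ := Finset.card_eq_one.mp hs
    simp

section LinearBranching

variable {ρ : Type*} [DecidableEq ρ] {V : Finset (Finset ρ)}
  {B : Finset (Finset ρ × Finset ρ)}

theorem IsLinear.card_filter_snd_eq_le_one (hlin : IsLinear B) (v : Finset ρ) :
    (B.filter fun p => p.2 = v).card ≤ 1 :=
  Finset.card_le_one.mpr fun p hp q hq =>
    have h2 : p.2 = q.2 := (Finset.mem_filter.mp hp).2.trans (Finset.mem_filter.mp hq).2.symm
    Prod.ext (hlin p (Finset.mem_filter.mp hp).1 q (Finset.mem_filter.mp hq).1 h2) h2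

theorem IsBranching.injOn_fst (hB : IsBranching V B) :
    Set.InjOn Prod.fst (B : Set (Finset ρ × Finset ρ)) :=
  fun p hp q hq h => Prod.ext h (hB.2 p hp q hq h)

theorem IsBranching.nuB_add_card_cover (hB : IsBranching V B) (v : Finset ρ) :
    nuB B v + ((B.filter fun p => p.2 = v).sup fun p => p.1).card = v.card := by
  refine Finset.card_sdiff_add_card_eq_card (Finset.sup_le fun p hp => ?_)
  rw [Finset.mem_filter] at hp
  exact hp.2 ▸ (hB.1 p hp.1).2.2.subset

theorem IsBranching.uncov_add_sum_card_fst (hB : IsBranching V B) (hlin : IsLinear B) :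
    uncov V B + ∑ p ∈ B, p.1.card = ∑ v ∈ V, v.card := by
  have hcover : ∑ v ∈ V, ((B.filter fun p => p.2 = v).sup fun p => p.1).card =
      ∑ p ∈ B, p.1.card := by
    rw [← Finset.sum_fiberwise_of_maps_to fun p hp => (hB.1 p hp).2.1]
    exact Finset.sum_congr rfl fun v _ =>
      Finset.card_sup_eq_sum_card_of_card_le_one (hlin.card_filter_snd_eq_le_one v) _
  rw [← hcover, uncov, ← Finset.sum_add_distrib]
  exact Finset.sum_congr rfl fun v _ => hB.nuB_add_card_cover v

theorem IsBranching.sum_card_filter_not_tail_add_sum_card_fst (hB : IsBranching V B) :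
    ∑ v ∈ V.filter (fun v => ∀ p ∈ B, p.1 ≠ v), v.card + ∑ p ∈ B, p.1.card =
      ∑ v ∈ V, v.card := by
  have htails : V.filter (fun v => ¬ ∀ p ∈ B, p.1 ≠ v) = B.image Prod.fst := by
    ext v
    simp only [Finset.mem_filter, Finset.mem_image, not_forall, not_not, exists_prop]
    constructor
    · rintro ⟨_, p, hp, rfl⟩
      exact ⟨p, hp, rfl⟩
    · rintro ⟨p, hp, rfl⟩
      exact ⟨(hB.1 p hp).1, p, hp, rfl⟩
  rw [← Finset.sum_image hB.injOn_fst, ← htails, Finset.sum_filter_add_sum_filter_not]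

theorem IsBranching.uncov_eq_sum_card_filter_not_tail (hB : IsBranching V B)
    (hlin : IsLinear B) :
    uncov V B = ∑ v ∈ V.filter (fun v => ∀ p ∈ B, p.1 ≠ v), v.card := by
  have h₁ := hB.uncov_add_sum_card_fst hlin
  have h₂ := hB.sum_card_filter_not_tail_add_sum_card_fst
  omega

end LinearBranching

/-- For every binary matrix `M` and every linear branching `B` of `D_M`,
the number of `B`-uncovered pairs equals `Σ_{v ∈ max B} |v|`, where `max B`
is the set of vertices of out-degree zero in `B`. -/
theorem stmt4 {m n : ℕ} (M : Matrix (Fin m) (Fin n) Bool)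
    (B : Finset (Finset (Fin m) × Finset (Fin m)))
    (hB : IsBranching (suppFamily M) B) (hlin : IsLinear B) :
    uncov (suppFamily M) B =
      ∑ v ∈ (suppFamily M).filter (fun v => ∀ p ∈ B, p.1 ≠ v), v.card := by
  -- the statement decides its filter through the `Fintype` instance on pairs of finsets
  convert hB.uncov_eq_sum_card_filter_not_tail hlin
end

section
/- For every binary matrix M and every row r, the chromatic number of the conflict graph G_{M,r} equals the width of the principal subgraph D_{M,r} of the containment digraph corresponding to r. -/
open Classical Finset

/-- Two columns `i`, `j` of the binary matrix `M` are in conflict if there are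
rows whose entries restricted to `(i,j)` are `(1,1)`, `(1,0)` and `(0,1)`. -/
def InConflict {m n : ℕ} (M : Matrix (Fin m) (Fin n) Bool) (i j : Fin n) :
    Prop :=
  (∃ p, M p i = true ∧ M p j = true) ∧
  (∃ q, M q i = true ∧ M q j = false) ∧
  (∃ s, M s i = false ∧ M s j = true)

/-- The conflict graph `G_{M,r}`: vertices are the columns with a `1` in
row `r`, two of them adjacent iff the corresponding columns are in conflict. -/
noncomputable def conflictGraph {m n : ℕ} (M : Matrix (Fin m) (Fin n) Bool)
    (r : Fin m) : SimpleGraph {j : Fin n // M r j = true} :=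
  SimpleGraph.fromRel fun i j => InConflict M i.1 j.1

/-!
Two columns with a `1` in row `r` share that row, so they are in conflict exactly when their
supports are incomparable. Hence colour classes of `G_{M,r}` may be taken to be chains of
`D_{M,r}`, antichains of `D_{M,r}` lift to cliques, and the theorem is Dilworth's theorem for
`D_{M,r}`. Dilworth's theorem follows by Galvin's induction: remove a maximal element `a`, cover
the rest by `k` chains, and in each chain take the top among the elements lying in some maximum
antichain. These tops form an antichain; either `a` extends it, or `a` lies above some top `y`,
and removing `a` with the part of `y`'s chain below `y` leaves no antichain of size `k`.
-/

section Dilworth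

variable {α : Type*} [PartialOrder α]

/-- `f` partitions `s` into the `k` chains `{x ∈ s | f x = i}`, `i < k`. -/
def IsChainPartition (s : Finset α) (k : ℕ) (f : α → ℕ) : Prop :=
  (∀ x ∈ s, f x < k) ∧ ∀ x ∈ s, ∀ y ∈ s, f x = f y → x ≤ y ∨ y ≤ x

namespace IsChainPartition

variable {s t A B K : Finset α} {k : ℕ} {f : α → ℕ}

lemma mono (h : IsChainPartition s k f) (hts : t ⊆ s) {l : ℕ} (hkl : k ≤ l) :
    IsChainPartition t l f :=
  ⟨fun x hx => (h.1 x (hts hx)).trans_le hkl, fun x hx y hy => h.2 x (hts hx) y (hts hy)⟩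

lemma injOn (h : IsChainPartition s k f) (hAs : A ⊆ s)
    (hA : IsAntichain (· ≤ ·) (A : Set α)) :
    Set.InjOn f A := by
  intro x hx y hy hxy
  by_contra hne
  exact (h.2 x (hAs hx) y (hAs hy) hxy).elim (hA hx hy hne) (hA hy hx (Ne.symm hne))

lemma image_subset_range (h : IsChainPartition s k f) : s.image f ⊆ range k := by
  intro i hi
  obtain ⟨x, hx, rfl⟩ := mem_image.1 hi
  exact mem_range.2 (h.1 x hx)

lemma card_le (h : IsChainPartition s k f) (hAs : A ⊆ s)
    (hA : IsAntichain (· ≤ ·) (A : Set α)) :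
    #A ≤ k := by
  rw [← card_image_of_injOn (h.injOn hAs hA), ← card_range k]
  exact card_le_card (h.mono hAs le_rfl).image_subset_range

lemma exists_mem_eq (h : IsChainPartition s k f) (hAs : A ⊆ s)
    (hA : IsAntichain (· ≤ ·) (A : Set α)) (hAk : #A = k) {i : ℕ} (hi : i < k) :
    ∃ x ∈ A, f x = i := by
  have hAf : A.image f = range k := eq_of_subset_of_card_le (h.mono hAs le_rfl).image_subset_range
    (by rw [card_range, card_image_of_injOn (h.injOn hAs hA), hAk])
  have hi' : i ∈ A.image f := hAf ▸ mem_range.2 hi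
  simpa using hi'

lemma extend_by_chain (h : IsChainPartition (s \ K) k f) (hK : IsChain (· ≤ ·) (K : Set α)) :
    IsChainPartition s (k + 1) fun x => if x ∈ K then k else f x := by
  refine ⟨fun x hx => ?_, fun x hx y hy hxy => ?_⟩
  · dsimp only
    split_ifs with hxK
    · exact Nat.lt_succ_self k
    · exact (h.1 x (mem_sdiff.2 ⟨hx, hxK⟩)).trans (Nat.lt_succ_self k)
  · by_cases hxK : x ∈ K <;> by_cases hyK : y ∈ K <;>
      simp only [hxK, hyK, if_true, if_false] at hxy
    · exact hK.total hxK hyK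
    · exact absurd hxy (h.1 y (mem_sdiff.2 ⟨hy, hyK⟩)).ne'
    · exact absurd hxy (h.1 x (mem_sdiff.2 ⟨hx, hxK⟩)).ne
    · exact h.2 x (mem_sdiff.2 ⟨hx, hxK⟩) y (mem_sdiff.2 ⟨hy, hyK⟩) hxy


lemma exists_antichain_of_tops (h : IsChainPartition t k f) (hAt : A ⊆ t)
    (hA : IsAntichain (· ≤ ·) (A : Set α)) (hAk : #A = k) :
    ∃ T ⊆ t, IsAntichain (· ≤ ·) (T : Set α) ∧ #T = k ∧
      ∀ B ⊆ t, IsAntichain (· ≤ ·) (B : Set α) → #B = k →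
        ∀ x ∈ B, ∀ y ∈ T, f x = f y → x ≤ y := by
  set U := t.filter fun x =>
    ∃ B ⊆ t, IsAntichain (· ≤ ·) (B : Set α) ∧ #B = k ∧ x ∈ B
  set T := U.filter fun y => ∀ x ∈ U, f x = f y → x ≤ y
  have hUt : U ⊆ t := filter_subset _ _
  have hTU : T ⊆ U := filter_subset _ _
  have mem_U {B x} (hBt : B ⊆ t) (hB : IsAntichain (· ≤ ·) (B : Set α)) (hBk : #B = k)
      (hx : x ∈ B) : x ∈ U := mem_filter.2 ⟨hBt hx, B, hBt, hB, hBk, hx⟩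
  have top_mem_T {i} (hi : i < k) : ∃ y ∈ T, f y = i := by
    obtain ⟨x, hxA, hxi⟩ := h.exists_mem_eq hAt hA hAk hi
    obtain ⟨y, hy, hymax⟩ := (U.filter fun x => f x = i).exists_maximal
      ⟨x, mem_filter.2 ⟨mem_U hAt hA hAk hxA, hxi⟩⟩
    obtain ⟨hyU, hyi⟩ := mem_filter.1 hy
    refine ⟨y, mem_filter.2 ⟨hyU, fun z hzU hzy => ?_⟩, hyi⟩
    exact (h.2 z (hUt hzU) y (hUt hyU) hzy).elim id
      fun hyz => hymax (mem_filter.2 ⟨hzU, hzy.trans hyi⟩) hyz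
  have hT : IsAntichain (· ≤ ·) (T : Set α) := by
    intro y hy y' hy' hne hle
    obtain ⟨hyU, hytop⟩ := mem_filter.1 hy
    obtain ⟨hy'U, hy'top⟩ := mem_filter.1 hy'
    by_cases hf : f y = f y'
    · exact hne (le_antisymm hle (hytop y' hy'U hf.symm))
    obtain ⟨B, hBt, hB, hBk, hy'B⟩ := (mem_filter.1 hy'U).2
    obtain ⟨x, hxB, hxy⟩ := h.exists_mem_eq hBt hB hBk (h.1 y (hUt hyU))
    have hxy' : x ≠ y' := fun hx => hf (hx ▸ hxy).symm
    exact hB hxB hy'B hxy' ((hytop x (mem_U hBt hB hBk hxB) hxy).trans hle)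
  have hTk : #T = k := by
    refine le_antisymm (h.card_le (hTU.trans hUt) hT) ?_
    calc k = #(range k) := (card_range k).symm
      _ ≤ #(T.image f) := card_le_card fun i hi => by
          obtain ⟨y, hyT, rfl⟩ := top_mem_T (mem_range.1 hi)
          exact mem_image_of_mem f hyT
      _ ≤ #T := card_image_le
  exact ⟨T, hTU.trans hUt, hT, hTk, fun B hBt hB hBk x hxB y hyT hxy =>
    (mem_filter.1 hyT).2 x (mem_U hBt hB hBk hxB) hxy⟩

lemma isChain_lowerPart (h : IsChainPartition t k f) (y : α) :
    IsChain (· ≤ ·) ((t.filter fun x => f x = f y ∧ x ≤ y : Finset α) : Set α) := by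
  intro x hx x' hx' _
  obtain ⟨hxt, hxy, -⟩ := mem_filter.1 hx
  obtain ⟨hx't, hx'y, -⟩ := mem_filter.1 hx'
  exact h.2 x hxt x' hx't (hxy.trans hx'y.symm)

lemma card_lt_of_disjoint_lowerPart (h : IsChainPartition t k f) {y : α} (hy : y ∈ t)
    (htop : ∀ B ⊆ t, IsAntichain (· ≤ ·) (B : Set α) → #B = k →
      ∀ x ∈ B, f x = f y → x ≤ y)
    (hBt : B ⊆ t) (hB : IsAntichain (· ≤ ·) (B : Set α))
    (hdisj : Disjoint B (t.filter fun x => f x = f y ∧ x ≤ y)) : #B < k := by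
  by_contra! hle
  obtain ⟨B', hB'B, hB'k⟩ := exists_subset_card_eq hle
  have hB't := hB'B.trans hBt
  have hB' := hB.subset hB'B
  obtain ⟨x, hxB', hxy⟩ := h.exists_mem_eq hB't hB' hB'k (h.1 y hy)
  exact disjoint_left.1 hdisj (hB'B hxB')
    (mem_filter.2 ⟨hB't hxB', hxy, htop B' hB't hB' hB'k x hxB' hxy⟩)

end IsChainPartition

/-- Dilworth's theorem. -/
theorem exists_isAntichain_isChainPartition (s : Finset α) :
    ∃ A ⊆ s, IsAntichain (· ≤ ·) (A : Set α) ∧ ∃ f, IsChainPartition s #A f := by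
  induction s using Finset.strongInduction with
  | _ s ih =>
  obtain rfl | hs := s.eq_empty_or_nonempty
  · exact ⟨∅, subset_rfl, by simp, fun _ => 0, by simp [IsChainPartition]⟩
  obtain ⟨a, has, hamax⟩ := s.exists_maximal hs
  obtain ⟨A, hAs, hA, f, hf⟩ := ih (s.erase a) (erase_ssubset has)
  obtain ⟨T, hTs, hT, hTk, htop⟩ := hf.exists_antichain_of_tops hAs hA rfl
  by_cases hbelow : ∃ y ∈ T, y ≤ a
  · obtain ⟨y, hyT, hya⟩ := hbelow
    set L := (s.erase a).filter fun x => f x = f y ∧ x ≤ y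
    have hK : IsChain (· ≤ ·) ((insert a L : Finset α) : Set α) := by
      rw [coe_insert]
      exact (hf.isChain_lowerPart y).insert fun x hx _ => Or.inr ((mem_filter.1 hx).2.2.trans hya)
    have hsK : s \ insert a L = s.erase a \ L := by rw [sdiff_insert, erase_sdiff_comm]
    obtain ⟨B, hBs, hB, g, hg⟩ := ih (s \ insert a L)
      (sdiff_ssubset (insert_subset has (filter_subset _ _ |>.trans (erase_subset a s)))
        ⟨a, mem_insert_self a L⟩)
    rw [hsK] at hBs
    have hBA : #B < #A := hf.card_lt_of_disjoint_lowerPart (hTs hyT)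
      (fun B hBs hB hBk x hxB => htop B hBs hB hBk x hxB y hyT) (hBs.trans sdiff_subset) hB
      (disjoint_of_subset_left hBs sdiff_disjoint)
    exact ⟨A, hAs.trans (erase_subset a s), hA, _,
      (hg.extend_by_chain hK).mono subset_rfl hBA⟩
  · push Not at hbelow
    have hf' : IsChainPartition (s \ {a}) #A f := sdiff_singleton_eq_erase a s ▸ hf
    refine ⟨insert a T, insert_subset has (hTs.trans (erase_subset a s)), ?_, _,
      hf'.extend_by_chain (K := {a}) (by simp) |>.mono subset_rfl ?_⟩
    · rw [coe_insert]
      exact hT.insert (fun y hy _ => hbelow y hy)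
        fun y hy _ hay => hbelow y hy (hamax (hTs.trans (erase_subset a s) hy) hay)
    · rw [card_insert_of_notMem fun haT => (mem_erase.1 (hTs haT)).1 rfl, hTk]

end Dilworth

section Families

variable {ρ : Type*}

lemma isAntichainFam_iff {X : Finset (Finset ρ)} :
    IsAntichainFam X ↔ IsAntichain (· ≤ ·) (X : Set (Finset ρ)) :=
  ⟨fun h _ hu _ hv huv => (h _ hu _ hv huv).1,
    fun h _ hu _ hv huv => ⟨h hu hv huv, h hv hu (Ne.symm huv)⟩⟩

variable [DecidableEq ρ]

lemma card_le_widthFam {V A : Finset (Finset ρ)} (hAV : A ⊆ V) (hA : IsAntichainFam A) :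
    #A ≤ widthFam V :=
  le_sup (mem_filter.2 ⟨mem_powerset.2 hAV, hA⟩)

lemma exists_isAntichainFam_card_eq_widthFam (V : Finset (Finset ρ)) :
    ∃ A ⊆ V, IsAntichainFam A ∧ #A = widthFam V := by
  have hempty : IsAntichainFam (∅ : Finset (Finset ρ)) := fun u hu => absurd hu (notMem_empty u)
  obtain ⟨A, hA, hAw⟩ := exists_mem_eq_sup _
    ⟨∅, mem_filter.2 ⟨empty_mem_powerset V, hempty⟩⟩ card
  obtain ⟨hAV, hA⟩ := mem_filter.1 hA
  exact ⟨A, mem_powerset.1 hAV, hA, hAw.symm⟩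

end Families

section ConflictGraph

variable {m n : ℕ} (M : Matrix (Fin m) (Fin n) Bool) {r : Fin m}

def colSupport (j : Fin n) : Finset (Fin m) := univ.filter fun i => M i j = true

lemma colSupport_subset_iff {i j : Fin n} :
    colSupport M i ⊆ colSupport M j ↔ ∀ q, M q i = true → M q j = true := by
  simp [colSupport, subset_iff]

lemma inConflict_iff {i j : Fin n} :
    InConflict M i j ↔ (∃ p, M p i = true ∧ M p j = true) ∧
      ¬ colSupport M i ⊆ colSupport M j ∧ ¬ colSupport M j ⊆ colSupport M i := by
  simp [InConflict, colSupport_subset_iff, and_comm]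

lemma conflictGraph_adj_iff (x y : {j : Fin n // M r j = true}) :
    (conflictGraph M r).Adj x y ↔
      ¬ colSupport M x ⊆ colSupport M y ∧ ¬ colSupport M y ⊆ colSupport M x := by
  have hxy : ∃ p, M p x = true ∧ M p y = true := ⟨r, x.2, y.2⟩
  have hyx : ∃ p, M p y = true ∧ M p x = true := ⟨r, y.2, x.2⟩
  simp only [conflictGraph, SimpleGraph.fromRel_adj, inConflict_iff, hxy, hyx, true_and]
  constructor
  · rintro ⟨-, h | h⟩
    exacts [h, h.symm]
  · exact fun h => ⟨fun hxy => h.1 (hxy ▸ subset_rfl), Or.inl h⟩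

lemma mem_filter_suppFamily_iff {v : Finset (Fin m)} :
    v ∈ (suppFamily M).filter (fun v => r ∈ v) ↔
      ∃ x : {j : Fin n // M r j = true}, colSupport M x = v := by
  simp only [mem_filter, suppFamily, mem_image, mem_univ, true_and]
  constructor
  · rintro ⟨⟨j, rfl⟩, hr⟩
    exact ⟨⟨j, by simpa using hr⟩, rfl⟩
  · rintro ⟨x, rfl⟩
    exact ⟨⟨x, rfl⟩, by simpa [colSupport] using x.2⟩

lemma chromaticNumber_le_of_isChainPartition {k : ℕ} {f : Finset (Fin m) → ℕ}
    (hf : IsChainPartition ((suppFamily M).filter fun v => r ∈ v) k f) :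
    (conflictGraph M r).chromaticNumber ≤ k := by
  have hmem (x : {j : Fin n // M r j = true}) :
      colSupport M x ∈ (suppFamily M).filter fun v => r ∈ v :=
    (mem_filter_suppFamily_iff M).2 ⟨x, rfl⟩
  refine SimpleGraph.Colorable.chromaticNumber_le ⟨SimpleGraph.Coloring.mk
    (fun x => ⟨f (colSupport M x), hf.1 _ (hmem x)⟩) fun {x y} hadj hxy => ?_⟩
  rw [conflictGraph_adj_iff] at hadj
  exact (hf.2 _ (hmem x) _ (hmem y) (congrArg Fin.val hxy)).elim hadj.1 hadj.2

lemma card_le_chromaticNumber_of_isAntichain {A : Finset (Finset (Fin m))}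
    (hAV : A ⊆ (suppFamily M).filter fun v => r ∈ v)
    (hA : IsAntichain (· ≤ ·) (A : Set (Finset (Fin m)))) :
    (#A : ℕ∞) ≤ (conflictGraph M r).chromaticNumber := by
  choose col hcol using fun v : A => (mem_filter_suppFamily_iff M).1 (hAV v.2)
  have hinj : Function.Injective col := fun u v huv =>
    Subtype.ext ((hcol u).symm.trans (huv ▸ hcol v))
  have hclique : (conflictGraph M r).IsClique (univ.map ⟨col, hinj⟩ : Set _) := by
    rw [coe_map, coe_univ, Set.image_univ]
    rintro _ ⟨u, rfl⟩ _ ⟨v, rfl⟩ hne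
    have huv : u.1 ≠ v.1 := fun h => hne (congrArg col (Subtype.ext h))
    rw [conflictGraph_adj_iff]
    simp only [Function.Embedding.coeFn_mk, hcol]
    exact ⟨hA u.2 v.2 huv, hA v.2 u.2 huv.symm⟩
  simpa using hclique.card_le_chromaticNumber

end ConflictGraph

/-- For every binary matrix `M` and row `r`, the chromatic number of the
conflict graph `G_{M,r}` equals the width of the principal subgraph
`D_{M,r}` of the containment digraph. -/
theorem stmt6 {m n : ℕ} (M : Matrix (Fin m) (Fin n) Bool) (r : Fin m) :
    (conflictGraph M r).chromaticNumber =
      (widthFam ((suppFamily M).filter fun v => r ∈ v) : ℕ∞) := by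
  set V := (suppFamily M).filter fun v => r ∈ v
  apply le_antisymm
  · obtain ⟨A, hAV, hA, f, hf⟩ := exists_isAntichain_isChainPartition V
    calc (conflictGraph M r).chromaticNumber ≤ #A := chromaticNumber_le_of_isChainPartition M hf
      _ ≤ widthFam V := by exact_mod_cast card_le_widthFam hAV (isAntichainFam_iff.2 hA)
  · obtain ⟨A, hAV, hA, hAw⟩ := exists_isAntichainFam_card_eq_widthFam V
    exact hAw ▸ card_le_chromaticNumber_of_isAntichain M hAV (isAntichainFam_iff.1 hA)
end

section
/- For a binary matrix M, let w(v) = |v| for each vertex v of the containment digraph D_M (the cardinality of the support set). Then the maximum weight α_w(M) of an antichain in D_M with respect to w is at most Σ_{r ∈ R_M} width(D_{M,r}), the sum over rows r of the widths of the principal subgraphs. -/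
open Classical Finset

/-!
Double counting: the weight `Σ_{v ∈ X} |v|` of an antichain `X` equals
`Σ_r |{v ∈ X | r ∈ v}|`, and each `{v ∈ X | r ∈ v}` is an antichain of the
principal subfamily at `r`, hence has at most its width many members.
-/

variable {ρ : Type*}

theorem sum_card_eq_sum_card_filter_mem [DecidableEq ρ] [Fintype ρ] (S : Finset (Finset ρ)) :
    ∑ v ∈ S, v.card = ∑ r : ρ, (S.filter fun v => r ∈ v).card := by
  simp_rw [card_eq_sum_ones, sum_filter]
  rw [sum_comm]
  simp

theorem IsAntichainFam.mono {S T : Finset (Finset ρ)} (hT : IsAntichainFam T) (hST : S ⊆ T) :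
    IsAntichainFam S :=
  fun u hu v hv huv => hT u (hST hu) v (hST hv) huv

theorem card_le_widthFam_s7 [DecidableEq ρ] {S V : Finset (Finset ρ)} (hSV : S ⊆ V)
    (hS : IsAntichainFam S) :
    S.card ≤ widthFam V :=
  le_sup (f := Finset.card) (mem_filter.2 ⟨mem_powerset.2 hSV, hS⟩)

theorem alphaW_le_sum_widthFam_filter_mem [DecidableEq ρ] [Fintype ρ] (V : Finset (Finset ρ)) :
    alphaW V ≤ ∑ r : ρ, widthFam (V.filter fun v => r ∈ v) := by
  refine Finset.sup_le fun S hS => ?_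
  obtain ⟨hSV, hS⟩ := mem_filter.1 hS
  rw [sum_card_eq_sum_card_filter_mem]
  exact sum_le_sum fun r _ =>
    card_le_widthFam_s7 (filter_subset_filter _ (mem_powerset.1 hSV)) (hS.mono (filter_subset _ _))

/-- For a binary matrix `M` with vertex weights `w(v) = |v|`, the maximum
weight `α_w(M)` of an antichain in `D_M` is at most the sum, over the rows
`r` of `M`, of the widths of the principal subgraphs `D_{M,r}`. -/
theorem stmt7 {m n : ℕ} (M : Matrix (Fin m) (Fin n) Bool) :
    alphaW (suppFamily M) ≤
      ∑ r : Fin m, widthFam ((suppFamily M).filter fun v => r ∈ v) :=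
  alphaW_le_sum_widthFam_filter_mem (suppFamily M)
end

section
/- Let M be a binary matrix whose containment digraph D_M has exactly q sinks, where q equals the width of D_M. Then α_w(M) = β(M) = β_ℓ(M), where α_w(M) is the maximum total cardinality of an antichain in D_M, β(M) is the minimum number of uncovered pairs over all branchings, and β_ℓ(M) is the minimum over linear branchings. In particular β(M) equals the sum of cardinalities of the maximal elements. -/
/-!
For any branching `B`, a vertex `v` satisfies `|v| ≤ ν_B(v) + Σ |u|` over the arcs `u → v`;
summing over `v`, and using that the tails of the arcs are distinct non-sinks, gives
`uncov B ≥ Σ_{s sink} |s|`. When the number of sinks equals the width, Hall's theorem applies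
twice: every antichain can be matched injectively into sinks containing its members, so
`α_w ≤ Σ_{s sink} |s|` (and the sinks themselves form an antichain), and the non-sinks can be
matched injectively into proper supersets. That matching is a linear branching in which every
non-sink covers its rows in its image, so it attains the lower bound.
-/

open Classical Finset

section ContainmentFamily

variable {ρ : Type*} [DecidableEq ρ] {V : Finset (Finset ρ)}

theorem exists_injective_of_card_le_card_filter {α β : Type*} [DecidableEq β]
    {X : Finset α} {T : Finset β} (r : α → β → Prop) [DecidableRel r]
    (hall : ∀ s ⊆ X, s.card ≤ (T.filter fun b => ∃ a ∈ s, r a b).card) :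
    ∃ f : X → β, Function.Injective f ∧ ∀ x, f x ∈ T ∧ r x (f x) := by
  have hall' : ∀ s : Finset X, s.card ≤ (s.biUnion fun x => T.filter (r x)).card := by
    intro s
    have hs := hall (s.map (Function.Embedding.subtype _)) fun a ha => by
      obtain ⟨x, -, rfl⟩ := mem_map.1 ha
      exact x.2
    rw [card_map] at hs
    refine hs.trans (card_le_card fun b hb => ?_)
    simp only [mem_filter, mem_map, Function.Embedding.coe_subtype] at hb
    obtain ⟨hbT, _, ⟨x, hx, rfl⟩, hxb⟩ := hb
    exact mem_biUnion.2 ⟨x, hx, mem_filter.2 ⟨hbT, hxb⟩⟩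
  obtain ⟨f, hf, hfT⟩ := (all_card_le_biUnion_card_iff_existsInjective' _).1 hall'
  exact ⟨f, hf, fun x => mem_filter.1 (hfT x)⟩

def sinks (V : Finset (Finset ρ)) : Finset (Finset ρ) :=
  V.filter fun v => ∀ w ∈ V, ¬ v ⊂ w

theorem mem_sinks {v : Finset ρ} : v ∈ sinks V ↔ v ∈ V ∧ ∀ w ∈ V, ¬ v ⊂ w :=
  mem_filter

theorem sinks_subset : sinks V ⊆ V :=
  filter_subset _ _

theorem isAntichainFam_sinks (V : Finset (Finset ρ)) : IsAntichainFam (sinks V) := by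
  intro u hu v hv huv
  exact ⟨fun h => (mem_sinks.1 hu).2 v (mem_sinks.1 hv).1 (h.ssubset_of_ne huv),
    fun h => (mem_sinks.1 hv).2 u (mem_sinks.1 hu).1 (h.ssubset_of_ne huv.symm)⟩

theorem isAntichainFam_filter_minimal (A : Finset (Finset ρ)) :
    IsAntichainFam (A.filter fun v => ∀ u ∈ A, ¬ u ⊂ v) := by
  intro u hu v hv huv
  rw [mem_filter] at hu hv
  exact ⟨fun h => hv.2 u hu.1 (h.ssubset_of_ne huv),
    fun h => hu.2 v hv.1 (h.ssubset_of_ne huv.symm)⟩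

theorem card_le_widthFam_s8 {X : Finset (Finset ρ)} (hXV : X ⊆ V) (hX : IsAntichainFam X) :
    X.card ≤ widthFam V :=
  Finset.le_sup (mem_filter.2 ⟨mem_powerset.2 hXV, hX⟩)

theorem sum_card_sinks_add_sum_card_sdiff :
    ∑ v ∈ sinks V, v.card + ∑ v ∈ V \ sinks V, v.card = ∑ v ∈ V, v.card := by
  rw [add_comm, sum_sdiff sinks_subset]

theorem card_le_card_sinks_superset (hw : (sinks V).card = widthFam V)
    {X : Finset (Finset ρ)} (hXV : X ⊆ V) (hX : IsAntichainFam X) :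
    X.card ≤ ((sinks V).filter fun t => ∃ x ∈ X, x ⊆ t).card := by
  set N := (sinks V).filter fun t => ∃ x ∈ X, x ⊆ t
  have hN : N ⊆ sinks V := filter_subset _ _
  have hnotN : ∀ t ∈ sinks V \ N, ∀ x ∈ X, ¬ x ⊆ t := fun t ht x hx hxt =>
    (mem_sdiff.1 ht).2 (mem_filter.2 ⟨(mem_sdiff.1 ht).1, x, hx, hxt⟩)
  -- Adding to `X` the sinks above none of its members keeps an antichain.
  have hanti : IsAntichainFam (X ∪ (sinks V \ N)) := by
    intro u hu v hv huv
    rcases mem_union.1 hu with hu | hu <;> rcases mem_union.1 hv with hv | hv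
    · exact hX u hu v hv huv
    · exact ⟨hnotN v hv u hu, fun h => (mem_sinks.1 (mem_sdiff.1 hv).1).2 u (hXV hu)
        (h.ssubset_of_ne huv.symm)⟩
    · exact ⟨fun h => (mem_sinks.1 (mem_sdiff.1 hu).1).2 v (hXV hv)
        (h.ssubset_of_ne huv), hnotN u hu v hv⟩
    · exact isAntichainFam_sinks V u (mem_sdiff.1 hu).1 v (mem_sdiff.1 hv).1 huv
  have hdisj : Disjoint X (sinks V \ N) :=
    disjoint_left.2 fun x hx hxN => hnotN x hxN x hx subset_rfl
  have hle := card_le_widthFam_s8 (union_subset hXV (sdiff_subset.trans sinks_subset)) hanti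
  rw [card_union_of_disjoint hdisj, card_sdiff_of_subset hN, ← hw] at hle
  have := card_le_card hN
  omega

theorem exists_injective_sinks_superset (hw : (sinks V).card = widthFam V)
    {X : Finset (Finset ρ)} (hXV : X ⊆ V) (hX : IsAntichainFam X) :
    ∃ f : X → Finset ρ, Function.Injective f ∧ ∀ x, f x ∈ sinks V ∧ (x : Finset ρ) ⊆ f x :=
  exists_injective_of_card_le_card_filter _ fun _ hs =>
    card_le_card_sinks_superset hw (hs.trans hXV) fun u hu v hv => hX u (hs hu) v (hs hv)

/-- Hall's condition for matching the non-sinks into proper supersets: the minimal members of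
`A` have distinct sinks above them, and the other members of `A` are proper supersets of members
of `A`. -/
theorem card_le_card_ssuperset (hw : (sinks V).card = widthFam V)
    {A : Finset (Finset ρ)} (hA : A ⊆ V \ sinks V) :
    A.card ≤ (V.filter fun t => ∃ a ∈ A, a ⊂ t).card := by
  set N := V.filter fun t => ∃ a ∈ A, a ⊂ t
  set Amin := A.filter fun v => ∀ u ∈ A, ¬ u ⊂ v
  set P := (sinks V).filter fun t => ∃ a ∈ Amin, a ⊆ t
  have hAmin : Amin ⊆ A := filter_subset _ _
  have hAV : A ⊆ V := hA.trans sdiff_subset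
  have hPN : P ⊆ N := by
    intro t ht
    obtain ⟨hts, a, ha, hat⟩ := mem_filter.1 ht
    have hne : a ≠ t := fun h => (mem_sdiff.1 (hA (hAmin ha))).2 (h ▸ hts)
    exact mem_filter.2 ⟨sinks_subset hts, a, hAmin ha, hat.ssubset_of_ne hne⟩
  have hrestN : A \ Amin ⊆ N := by
    intro w hw
    obtain ⟨hwA, hwmin⟩ := mem_sdiff.1 hw
    simp only [Amin, mem_filter, hwA, true_and, not_forall, not_not] at hwmin
    obtain ⟨u, huA, huw⟩ := hwmin
    exact mem_filter.2 ⟨hAV hwA, u, huA, huw⟩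
  have hdisj : Disjoint (A \ Amin) P := disjoint_left.2 fun t ht htP =>
    (mem_sdiff.1 (hA (mem_sdiff.1 ht).1)).2 (mem_filter.1 htP).1
  have hmin : Amin.card ≤ P.card :=
    card_le_card_sinks_superset hw (hAmin.trans hAV) (isAntichainFam_filter_minimal A)
  have hcover := card_le_card (union_subset hrestN hPN)
  rw [card_union_of_disjoint hdisj, card_sdiff_of_subset hAmin] at hcover
  have := card_le_card hAmin
  omega

theorem exists_injective_ssuperset (hw : (sinks V).card = widthFam V) :
    ∃ g : (V \ sinks V : Finset (Finset ρ)) → Finset ρ, Function.Injective g ∧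
      ∀ v, g v ∈ V ∧ (v : Finset ρ) ⊂ g v :=
  exists_injective_of_card_le_card_filter _ fun _ hs => card_le_card_ssuperset hw hs

theorem card_le_nuB_add_sum_card_fst (B : Finset (Finset ρ × Finset ρ)) (v : Finset ρ) :
    v.card ≤ nuB B v + ∑ p ∈ B.filter (fun p => p.2 = v), p.1.card := by
  unfold nuB
  set F := B.filter fun p => p.2 = v
  have hU : (F.sup fun p => p.1).card ≤ ∑ p ∈ F, p.1.card := by
    rw [sup_eq_biUnion]
    exact card_biUnion_le
  have hv : v ⊆ (v \ F.sup fun p => p.1) ∪ F.sup fun p => p.1 := by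
    rw [sdiff_union_self_eq_union]
    exact subset_union_left
  have := (card_le_card hv).trans (card_union_le _ _)
  omega

theorem nuB_add_sum_card_fst_eq (B : Finset (Finset ρ × Finset ρ)) (hsub : ∀ p ∈ B, p.1 ⊆ p.2)
    (hB : IsLinear B) (v : Finset ρ) :
    nuB B v + ∑ p ∈ B.filter (fun p => p.2 = v), p.1.card = v.card := by
  have hone : (B.filter fun p => p.2 = v).card ≤ 1 := by
    refine card_le_one.2 fun p hp q hq => ?_
    rw [mem_filter] at hp hq
    exact Prod.ext (hB p hp.1 q hq.1 (hp.2.trans hq.2.symm)) (hp.2.trans hq.2.symm)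
  rcases card_le_one_iff_subset_singleton.1 hone with ⟨p, hp⟩
  rcases subset_singleton_iff.1 hp with hempty | hsingle
  · simp [nuB, hempty]
  · have hpF : p ∈ B.filter fun p => p.2 = v := hsingle ▸ mem_singleton_self p
    obtain ⟨hpB, rfl⟩ := mem_filter.1 hpF
    rw [nuB, hsingle, sup_singleton, sum_singleton]
    exact card_sdiff_add_card_eq_card (hsub p hpB)

theorem sum_fiberwise_card_fst {B : Finset (Finset ρ × Finset ρ)} (hB : ∀ p ∈ B, p.2 ∈ V) :
    ∑ v ∈ V, ∑ p ∈ B.filter (fun p => p.2 = v), p.1.card = ∑ p ∈ B, p.1.card :=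
  sum_fiberwise_of_maps_to hB _

theorem sum_card_fst_eq_sum_image {B : Finset (Finset ρ × Finset ρ)} (hB : IsBranching V B) :
    ∑ p ∈ B, p.1.card = ∑ u ∈ B.image Prod.fst, u.card :=
  (sum_image fun p hp q hq hpq => Prod.ext hpq (hB.2 p hp q hq hpq)).symm

theorem image_fst_subset_sdiff_sinks {B : Finset (Finset ρ × Finset ρ)} (hB : IsBranching V B) :
    B.image Prod.fst ⊆ V \ sinks V := by
  simp only [subset_iff, mem_image, mem_sdiff, mem_sinks]
  rintro _ ⟨p, hp, rfl⟩
  obtain ⟨h1, h2, h3⟩ := hB.1 p hp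
  exact ⟨h1, fun hs => hs.2 p.2 h2 h3⟩

theorem sum_card_sinks_le_uncov {B : Finset (Finset ρ × Finset ρ)} (hB : IsBranching V B) :
    ∑ v ∈ sinks V, v.card ≤ uncov V B := by
  have hcover : ∑ v ∈ V, v.card ≤ uncov V B + ∑ p ∈ B, p.1.card := by
    rw [uncov, ← sum_fiberwise_card_fst fun p hp => (hB.1 p hp).2.1, ← sum_add_distrib]
    exact sum_le_sum fun v _ => card_le_nuB_add_sum_card_fst B v
  have htails : ∑ p ∈ B, p.1.card ≤ ∑ v ∈ V \ sinks V, v.card := by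
    rw [sum_card_fst_eq_sum_image hB]
    exact sum_le_sum_of_subset (image_fst_subset_sdiff_sinks hB)
  have := sum_card_sinks_add_sum_card_sdiff (V := V)
  omega

theorem exists_linear_branching_uncov_eq (hw : (sinks V).card = widthFam V) :
    ∃ B, IsBranching V B ∧ IsLinear B ∧ uncov V B = ∑ v ∈ sinks V, v.card := by
  obtain ⟨g, hg, hgV⟩ := exists_injective_ssuperset hw
  set B := (V \ sinks V).attach.image fun v : (V \ sinks V : Finset (Finset ρ)) =>
    ((v : Finset ρ), g v)
  have hmem : ∀ p ∈ B, ∃ v : (V \ sinks V : Finset (Finset ρ)), ((v : Finset ρ), g v) = p := by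
    simp [B]
  have hbranch : IsBranching V B := by
    refine ⟨fun p hp => ?_, fun p hp q hq hpq => ?_⟩
    · obtain ⟨v, rfl⟩ := hmem p hp
      exact ⟨(mem_sdiff.1 v.2).1, hgV v⟩
    · obtain ⟨v, rfl⟩ := hmem p hp
      obtain ⟨u, rfl⟩ := hmem q hq
      rw [Subtype.ext hpq]
  have hlinear : IsLinear B := by
    intro p hp q hq hpq
    obtain ⟨v, rfl⟩ := hmem p hp
    obtain ⟨u, rfl⟩ := hmem q hq
    rw [hg hpq]
  have hcover : uncov V B + ∑ p ∈ B, p.1.card = ∑ v ∈ V, v.card := by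
    rw [uncov, ← sum_fiberwise_card_fst fun p hp => (hbranch.1 p hp).2.1,
      ← sum_add_distrib]
    exact sum_congr rfl fun v _ =>
      nuB_add_sum_card_fst_eq B (fun p hp => (hbranch.1 p hp).2.2.subset) hlinear v
  have htails : B.image Prod.fst = V \ sinks V := by
    ext v
    simp [B]
  rw [sum_card_fst_eq_sum_image hbranch, htails] at hcover
  have := sum_card_sinks_add_sum_card_sdiff (V := V)
  exact ⟨B, hbranch, hlinear, by omega⟩

theorem beta_eq_sum_card_sinks (hw : (sinks V).card = widthFam V) :
    beta V = ∑ v ∈ sinks V, v.card := by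
  obtain ⟨B, hB, -, hBu⟩ := exists_linear_branching_uncov_eq hw
  refine IsLeast.csInf_eq ⟨⟨B, hB, hBu⟩, ?_⟩
  rintro _ ⟨B', hB', rfl⟩
  exact sum_card_sinks_le_uncov hB'

theorem betaL_eq_sum_card_sinks (hw : (sinks V).card = widthFam V) :
    betaL V = ∑ v ∈ sinks V, v.card := by
  obtain ⟨B, hB, hBl, hBu⟩ := exists_linear_branching_uncov_eq hw
  refine IsLeast.csInf_eq ⟨⟨B, hB, hBl, hBu⟩, ?_⟩
  rintro _ ⟨B', hB', -, rfl⟩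
  exact sum_card_sinks_le_uncov hB'

theorem alphaW_eq_sum_card_sinks (hw : (sinks V).card = widthFam V) :
    alphaW V = ∑ v ∈ sinks V, v.card := by
  refine le_antisymm (Finset.sup_le fun X hX => ?_) (Finset.le_sup (f := fun S => ∑ v ∈ S, v.card)
    (mem_filter.2 ⟨mem_powerset.2 sinks_subset, isAntichainFam_sinks V⟩))
  obtain ⟨hXV, hXA⟩ := mem_filter.1 hX
  obtain ⟨f, hf, hfs⟩ := exists_injective_sinks_superset hw (mem_powerset.1 hXV) hXA
  calc ∑ x ∈ X, x.card
      = ∑ x ∈ X.attach, (x : Finset ρ).card := (sum_attach _ _).symm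
    _ ≤ ∑ x ∈ X.attach, (f x).card := sum_le_sum fun x _ => card_le_card (hfs x).2
    _ = ∑ t ∈ X.attach.image f, t.card := (sum_image fun _ _ _ _ h => hf h).symm
    _ ≤ ∑ t ∈ sinks V, t.card := sum_le_sum_of_subset fun t ht => by
        obtain ⟨x, -, rfl⟩ := mem_image.1 ht
        exact (hfs x).1

end ContainmentFamily

/-- If the containment digraph `D_M` of a binary matrix `M` has exactly `q`
sinks, where `q` is the width of `D_M`, then
`α_w(M) = β(M) = β_ℓ(M)`, and `β(M)` equals the sum of the cardinalities of
the maximal elements. -/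
theorem stmt8 {m n : ℕ} (M : Matrix (Fin m) (Fin n) Bool)
    (h : ((suppFamily M).filter fun v =>
            ∀ w ∈ suppFamily M, ¬ v ⊂ w).card = widthFam (suppFamily M)) :
    alphaW (suppFamily M) = beta (suppFamily M) ∧
    beta (suppFamily M) = betaL (suppFamily M) ∧
    beta (suppFamily M) =
      ∑ v ∈ (suppFamily M).filter (fun v => ∀ w ∈ suppFamily M, ¬ v ⊂ w),
        v.card := by
  have hsinks : ((suppFamily M).filter fun v => ∀ w ∈ suppFamily M, ¬ v ⊂ w) =
      sinks (suppFamily M) := by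
    -- the two filters agree up to their decidability instances
    unfold sinks
    congr
  rw [hsinks] at h ⊢
  exact ⟨(alphaW_eq_sum_card_sinks h).trans (beta_eq_sum_card_sinks h).symm,
    (beta_eq_sum_card_sinks h).trans (betaL_eq_sum_card_sinks h).symm, beta_eq_sum_card_sinks h⟩
end

section
/- Let D be a finite transitive DAG in which the set of minimal elements is the unique maximum antichain. Then every non-minimal vertex has at least two in-neighbors. -/
/-!
If a non-minimal vertex `v` had a single in-neighbour `u`, then `u` would be minimal, since by
transitivity every predecessor of `u` is a predecessor of `v`. Exchanging `u` for `v` in the set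
of minimal elements then yields a different antichain of the same size.
-/

open Finset

section
variable {V : Type*} {r : V → V → Prop}

theorem forall_not_rel_of_forall_rel_eq (htrans : Transitive r) (hirr : Irreflexive r)
    {u v : V} (huv : r u v) (hpred : ∀ w, r w v → w = u) : ∀ w, ¬ r w u :=
  fun w hwu => hirr u (hpred w (htrans hwu huv) ▸ hwu)

theorem not_rel_insert_erase [DecidableEq V] (hirr : Irreflexive r) {M : Finset V}
    (hM : ∀ x ∈ M, ∀ w, ¬ r w x) {u v : V} (hpred : ∀ w, r w v → w = u) :
    ∀ a ∈ insert v (M.erase u), ∀ b ∈ insert v (M.erase u), ¬ r a b := by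
  intro a ha b hb hab
  rcases mem_insert.1 hb with rfl | hb
  · obtain rfl := hpred a hab
    rcases mem_insert.1 ha with rfl | ha
    · exact hirr a hab
    · exact (ne_of_mem_erase ha) rfl
  · exact hM b (mem_of_mem_erase hb) a hab

end

theorem Finset.card_insert_erase_of_mem_of_notMem {α : Type*} [DecidableEq α] {s : Finset α}
    {a b : α} (ha : a ∈ s) (hb : b ∉ s) : #(insert b (s.erase a)) = #s := by
  rw [card_insert_of_notMem fun h => hb (mem_of_mem_erase h), card_erase_add_one ha]

open Classical in
theorem stmt12_general {V : Type*} [Fintype V] (r : V → V → Prop)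
    (htrans : Transitive r) (hirr : Irreflexive r)
    (huniq : ∀ S : Finset V, (∀ u ∈ S, ∀ v ∈ S, ¬ r u v) →
        S.card = (Finset.univ.filter fun v : V => ∀ u, ¬ r u v).card →
        S = Finset.univ.filter fun v : V => ∀ u, ¬ r u v) :
    ∀ v : V, (∃ u, r u v) → ∃ u₁ u₂, u₁ ≠ u₂ ∧ r u₁ v ∧ r u₂ v := by
  rintro v ⟨u, huv⟩
  by_contra! h
  have hpred : ∀ w, r w v → w = u := fun w hwv => by_contra fun hne => h w u hne hwv huv
  set M := univ.filter fun x : V => ∀ w, ¬ r w x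
  have huM : u ∈ M := by simpa [M] using forall_not_rel_of_forall_rel_eq htrans hirr huv hpred
  have hvM : v ∉ M := by simpa [M] using ⟨u, huv⟩
  have hswap : insert v (M.erase u) = M :=
    huniq _ (not_rel_insert_erase hirr (fun x hx => (mem_filter.1 hx).2) hpred)
      (card_insert_erase_of_mem_of_notMem huM hvM)
  exact hvM (hswap ▸ mem_insert_self v _)

open Classical in
/-- In a finite transitive DAG (strict poset) whose set of minimal elements is
the unique maximum antichain, every non-minimal vertex has at least two
in-neighbors. -/
theorem stmt12 {V : Type*} [Fintype V] (r : V → V → Prop)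
    (htrans : Transitive r) (hirr : Irreflexive r)
    (hmax : ∀ S : Finset V, (∀ u ∈ S, ∀ v ∈ S, ¬ r u v) →
        S.card ≤ (Finset.univ.filter fun v : V => ∀ u, ¬ r u v).card)
    (huniq : ∀ S : Finset V, (∀ u ∈ S, ∀ v ∈ S, ¬ r u v) →
        S.card = (Finset.univ.filter fun v : V => ∀ u, ¬ r u v).card →
        S = Finset.univ.filter fun v : V => ∀ u, ¬ r u v) :
    ∀ v : V, (∃ u, r u v) → ∃ u₁ u₂, u₁ ≠ u₂ ∧ r u₁ v ∧ r u₂ v :=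
  stmt12_general r htrans hirr huniq
end

section
/- Let D_M be a containment digraph such that the set of minimal elements is the only maximum antichain of D_M. Then there exists a maximal optimal branching B of D_M whose set of leaves (vertices of in-degree zero in B) is exactly the set of minimal elements of D_M. -/
/-!
Since the minimal sets form a maximum antichain, every family `S` of non-minimal sets has at least
`|S|` members strictly below its members: otherwise the minimal sets not below `S`, together with
the maximal members of `S`, would form a larger antichain. By Hall's theorem there is therefore an
injection `g` sending each non-minimal set `v` to some `g v ⊂ v`.

Among the optimal branchings choose one maximising the number of its arcs plus the number of its
arcs of the form `(g v, v)`. Adding an arc never uncovers a row, so this branching is maximal. If a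
non-minimal `v` were a leaf, redirecting the out-arc `(g v, w)` of `g v` to `v` uncovers at most
`|g v|` rows of `w` and covers `|g v|` rows of `v`; by injectivity of `g` it creates an arc
`(g v, v)` and destroys none, contradicting the choice.
-/

open Classical Finset

section Antichains

variable {ρ : Type*}

theorem isAntichainFam_of_forall_not_ssubset {A : Finset (Finset ρ)}
    (h : ∀ a ∈ A, ∀ b ∈ A, ¬ a ⊂ b) : IsAntichainFam A := fun a ha b hb hab =>
  ⟨fun hsub => h a ha b hb (ssubset_of_subset_of_ne hsub hab),
    fun hsub => h b hb a ha (ssubset_of_subset_of_ne hsub hab.symm)⟩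

variable [DecidableEq ρ]

def minimalSets (V : Finset (Finset ρ)) : Finset (Finset ρ) :=
  V.filter fun v => ∀ u ∈ V, ¬ u ⊂ v

def nonMinimalSets (V : Finset (Finset ρ)) : Finset (Finset ρ) :=
  V.filter fun v => ∃ u ∈ V, u ⊂ v

theorem card_le_card_filter_ssubset {V S : Finset (Finset ρ)}
    (hmax : ∀ A ⊆ V, IsAntichainFam A → A.card ≤ (minimalSets V).card)
    (hS : S ⊆ nonMinimalSets V) :
    S.card ≤ (V.filter fun u => ∃ s ∈ S, u ⊂ s).card := by
  set N := V.filter fun u => ∃ s ∈ S, u ⊂ s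
  set top := S.filter fun s => ∀ t ∈ S, ¬ s ⊂ t
  have hSV : S ⊆ V := hS.trans (filter_subset _ _)
  have hS_nonmin : ∀ s ∈ S, ∃ u ∈ V, u ⊂ s := fun s hs => (mem_filter.1 (hS hs)).2
  have hanti : IsAntichainFam (minimalSets V \ N ∪ top) := by
    refine isAntichainFam_of_forall_not_ssubset fun a ha b hb hab => ?_
    have haV : a ∈ V := by
      rcases mem_union.1 ha with ha | ha
      · exact (mem_filter.1 (mem_sdiff.1 ha).1).1
      · exact hSV (mem_filter.1 ha).1
    rcases mem_union.1 hb with hb | hb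
    · exact (mem_filter.1 (mem_sdiff.1 hb).1).2 a haV hab
    rcases mem_union.1 ha with ha | ha
    · exact (mem_sdiff.1 ha).2 (mem_filter.2 ⟨haV, b, (mem_filter.1 hb).1, hab⟩)
    · exact (mem_filter.1 ha).2 b (mem_filter.1 hb).1 hab
  have hdisj : Disjoint (minimalSets V \ N) top := by
    refine disjoint_left.2 fun a ha hat => ?_
    obtain ⟨u, hu, hua⟩ := hS_nonmin a (mem_filter.1 hat).1
    exact (mem_filter.1 (mem_sdiff.1 ha).1).2 u hu hua
  have hA := hmax (minimalSets V \ N ∪ top) (union_subset (sdiff_subset.trans (filter_subset _ _))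
    ((filter_subset _ _).trans hSV)) hanti
  rw [card_union_of_disjoint hdisj] at hA
  have hS_split : S.card ≤ top.card + (S ∩ N).card := by
    refine (card_le_card fun s hs => ?_).trans (card_union_le _ _)
    by_cases hst : s ∈ top
    · exact mem_union_left _ hst
    · obtain ⟨t, ht, hst⟩ : ∃ t ∈ S, s ⊂ t := by simpa [top, hs] using hst
      exact mem_union_right _ (mem_inter.2 ⟨hs, mem_filter.2 ⟨hSV hs, t, ht, hst⟩⟩)
  have hN_split : (minimalSets V ∩ N).card + (S ∩ N).card ≤ N.card := by
    have hdisj' : Disjoint (minimalSets V ∩ N) (S ∩ N) := by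
      refine disjoint_left.2 fun a ha has => ?_
      obtain ⟨u, hu, hua⟩ := hS_nonmin a (mem_inter.1 has).1
      exact (mem_filter.1 (mem_inter.1 ha).1).2 u hu hua
    rw [← card_union_of_disjoint hdisj']
    exact card_le_card (union_subset inter_subset_right inter_subset_right)
  have := card_sdiff_add_card_inter (minimalSets V) N
  omega

theorem exists_injOn_ssubset_of_forall_card_le {V : Finset (Finset ρ)}
    (hmax : ∀ A ⊆ V, IsAntichainFam A → A.card ≤ (minimalSets V).card) :
    ∃ g : Finset ρ → Finset ρ, (∀ v ∈ nonMinimalSets V, g v ∈ V ∧ g v ⊂ v) ∧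
      Set.InjOn g (nonMinimalSets V) := by
  obtain ⟨f, hf_inj, hf_mem⟩ := (all_card_le_biUnion_card_iff_exists_injective
    fun v : nonMinimalSets V => V.filter (· ⊂ v.1)).1 fun s => by
      refine (card_map (Function.Embedding.subtype _)).symm.le.trans <|
        (card_le_card_filter_ssubset hmax ?_).trans (card_le_card fun u hu => ?_)
      · exact fun _ hv => by obtain ⟨v, -, rfl⟩ := mem_map.1 hv; exact v.2
      · obtain ⟨huV, _, hts, hut⟩ := mem_filter.1 hu
        obtain ⟨t, ht, rfl⟩ := mem_map.1 hts
        exact mem_biUnion.2 ⟨t, ht, mem_filter.2 ⟨huV, hut⟩⟩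
  refine ⟨fun v => if hv : v ∈ nonMinimalSets V then f ⟨v, hv⟩ else v, fun v hv => ?_,
    fun v hv v' hv' hvv' => ?_⟩
  · simpa [hv] using hf_mem ⟨v, hv⟩
  · simp only [dif_pos (show v ∈ nonMinimalSets V from hv),
      dif_pos (show v' ∈ nonMinimalSets V from hv')] at hvv'
    exact congrArg Subtype.val (hf_inj hvv')

end Antichains

section Uncovered

variable {ρ : Type*} [DecidableEq ρ] {V : Finset (Finset ρ)}
  {B B' : Finset (Finset ρ × Finset ρ)} {a : Finset ρ × Finset ρ} {u v w x : Finset ρ}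

theorem nuB_anti (h : B ⊆ B') (v : Finset ρ) : nuB B' v ≤ nuB B v :=
  card_le_card (sdiff_subset_sdiff subset_rfl (sup_mono (filter_subset_filter _ h)))

theorem uncov_anti (V : Finset (Finset ρ)) (h : B ⊆ B') : uncov V B' ≤ uncov V B :=
  sum_le_sum fun v _ => nuB_anti h v

theorem nuB_insert_of_ne (hx : x ≠ a.2) : nuB (insert a B) x = nuB B x := by
  rw [nuB, filter_insert, if_neg (Ne.symm hx), nuB]

theorem nuB_erase_of_ne (hx : x ≠ a.2) : nuB (B.erase a) x = nuB B x := by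
  rw [nuB, filter_erase, erase_eq_of_notMem fun h => hx (mem_filter.1 h).2.symm, nuB]

theorem nuB_erase_le (a : Finset ρ × Finset ρ) (x : Finset ρ) :
    nuB (B.erase a) x ≤ nuB B x + a.1.card := by
  set E := ((B.erase a).filter fun p => p.2 = x).sup Prod.fst
  have hcover : (B.filter fun p => p.2 = x).sup Prod.fst ⊆ a.1 ∪ E := by
    refine Finset.sup_le fun p hp => ?_
    by_cases hpa : p = a
    · exact hpa ▸ subset_union_left
    · exact subset_union_right.trans' <|
        le_sup (f := Prod.fst) (mem_filter.2 ⟨mem_erase.2 ⟨hpa, (mem_filter.1 hp).1⟩,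
          (mem_filter.1 hp).2⟩)
  calc nuB (B.erase a) x = (x \ E).card := rfl
    _ ≤ (x \ (a.1 ∪ E) ∪ a.1).card := card_le_card fun r hr => by
        by_cases hra : r ∈ a.1
        · exact mem_union_right _ hra
        · simp only [mem_sdiff, mem_union] at hr ⊢
          tauto
    _ ≤ (x \ (a.1 ∪ E)).card + a.1.card := card_union_le _ _
    _ ≤ nuB B x + a.1.card := by gcongr; exact card_le_card (sdiff_subset_sdiff subset_rfl hcover)

theorem nuB_insert_add_card (huv : u ⊆ v) (hv : ∀ p ∈ B, p.2 ≠ v) :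
    nuB (insert (u, v) B) v + u.card = nuB B v := by
  have hempty : (B.filter fun p => p.2 = v) = ∅ := filter_eq_empty_iff.2 hv
  rw [nuB, nuB, filter_insert, if_pos rfl, hempty, insert_empty, sup_singleton, sup_empty,
    bot_eq_empty, sdiff_empty]
  exact card_sdiff_add_card_eq_card huv

theorem uncov_add_nuB_eq (hw : w ∈ V) (h : ∀ x ≠ w, nuB B' x = nuB B x) :
    uncov V B' + nuB B w = uncov V B + nuB B' w := by
  rw [uncov, uncov, ← add_sum_erase V _ hw, ← add_sum_erase V _ hw,
    sum_congr rfl fun x hx => h x (ne_of_mem_erase hx)]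
  ring

theorem uncov_erase_le (ha : a.2 ∈ V) : uncov V (B.erase a) ≤ uncov V B + a.1.card := by
  have := uncov_add_nuB_eq (V := V) (B := B) ha fun x hx => nuB_erase_of_ne hx
  have := nuB_erase_le (B := B) a a.2
  omega

theorem uncov_insert_add_card (hv : v ∈ V) (huv : u ⊆ v) (hleaf : ∀ p ∈ B, p.2 ≠ v) :
    uncov V (insert (u, v) B) + u.card = uncov V B := by
  have := uncov_add_nuB_eq (V := V) (B := B) hv fun x hx => nuB_insert_of_ne (a := (u, v)) hx
  have := nuB_insert_add_card huv hleaf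
  omega

theorem uncov_reroute_le (hw : w ∈ V) (hv : v ∈ V) (huv : u ⊆ v)
    (hleaf : ∀ p ∈ B, p.2 ≠ v) :
    uncov V (insert (u, v) (B.erase (u, w))) ≤ uncov V B := by
  have := uncov_insert_add_card (B := B.erase (u, w)) hv huv fun p hp =>
    hleaf p (mem_of_mem_erase hp)
  have : uncov V (B.erase (u, w)) ≤ uncov V B + u.card := uncov_erase_le (a := (u, w)) hw
  omega

end Uncovered

section Branchings

variable {ρ : Type*} [DecidableEq ρ] {V : Finset (Finset ρ)}
  {B B' : Finset (Finset ρ × Finset ρ)} {u v w : Finset ρ}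

theorem IsBranching.mono (hB : IsBranching V B) (h : B' ⊆ B) : IsBranching V B' :=
  ⟨fun p hp => hB.1 p (h hp), fun p hp q hq => hB.2 p (h hp) q (h hq)⟩

theorem IsBranching.subset_product (hB : IsBranching V B) : B ⊆ V ×ˢ V :=
  fun p hp => mem_product.2 ⟨(hB.1 p hp).1, (hB.1 p hp).2.1⟩

theorem IsBranching.insert_of_forall_fst_ne (hB : IsBranching V B) (hv : v ∈ V) (hw : w ∈ V)
    (hvw : v ⊂ w) (hfree : ∀ p ∈ B, p.1 ≠ v) : IsBranching V (insert (v, w) B) := by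
  refine ⟨fun p hp => ?_, fun p hp q hq hpq => ?_⟩
  · rcases mem_insert.1 hp with rfl | hp
    exacts [⟨hv, hw, hvw⟩, hB.1 p hp]
  · rcases mem_insert.1 hp with rfl | hp <;> rcases mem_insert.1 hq with rfl | hq
    exacts [rfl, absurd hpq.symm (hfree q hq), absurd hpq (hfree p hp), hB.2 p hp q hq hpq]

theorem IsBranching.reroute (hB : IsBranching V B) (huw : (u, w) ∈ B) (hv : v ∈ V)
    (huv : u ⊂ v) : IsBranching V (insert (u, v) (B.erase (u, w))) :=
  (hB.mono (erase_subset _ _)).insert_of_forall_fst_ne (hB.1 _ huw).1 hv huv fun p hp hpu =>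
    (mem_erase.1 hp).1 (Prod.ext hpu (hB.2 p (mem_of_mem_erase hp) _ huw hpu))

theorem exists_isBranching_uncov_eq_beta (V : Finset (Finset ρ)) :
    ∃ B, IsBranching V B ∧ uncov V B = beta V :=
  Nat.sInf_mem (s := {k | ∃ B, IsBranching V B ∧ uncov V B = k})
    ⟨_, ∅, by simp [IsBranching], rfl⟩

theorem beta_le_uncov (hB : IsBranching V B) : beta V ≤ uncov V B :=
  Nat.sInf_le ⟨B, hB, rfl⟩

theorem leaves_eq_minimalSets (hB : IsBranching V B)
    (hin : ∀ v ∈ nonMinimalSets V, ∃ p ∈ B, p.2 = v) :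
    V.filter (fun v => ∀ p ∈ B, p.2 ≠ v) = minimalSets V := by
  refine filter_congr fun v hv => ⟨fun hleaf u hu huv => ?_, fun hmin p hp hpv => ?_⟩
  · obtain ⟨p, hp, hpv⟩ := hin v (mem_filter.2 ⟨hv, u, hu, huv⟩)
    exact hleaf p hp hpv
  · exact hmin p.1 (hB.1 p hp).1 (hpv ▸ (hB.1 p hp).2.2)

def matchingPotential (V : Finset (Finset ρ)) (g : Finset ρ → Finset ρ)
    (B : Finset (Finset ρ × Finset ρ)) : ℕ :=
  B.card + (V.filter fun v => (g v, v) ∈ B).card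

theorem matchingPotential_lt_insert {g : Finset ρ → Finset ρ} {a : Finset ρ × Finset ρ}
    (ha : a ∉ B) : matchingPotential V g B < matchingPotential V g (insert a B) := by
  have : (V.filter fun v => (g v, v) ∈ B).card ≤
      (V.filter fun v => (g v, v) ∈ insert a B).card :=
    card_le_card (monotone_filter_right _ fun _ _ h => mem_insert_of_mem h)
  rw [matchingPotential, matchingPotential, card_insert_of_notMem ha]
  omega

theorem matchingPotential_lt_reroute {g : Finset ρ → Finset ρ} (huw : (u, w) ∈ B)
    (huv : (u, v) ∉ B) (hv : v ∈ V) (hgv : g v = u) (hgw : g w ≠ u) :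
    matchingPotential V g B < matchingPotential V g (insert (u, v) (B.erase (u, w))) := by
  have hcard : (insert (u, v) (B.erase (u, w))).card = B.card := by
    rw [card_insert_of_notMem fun h => huv (mem_of_mem_erase h), card_erase_add_one huw]
  have hmatched : (V.filter fun x => (g x, x) ∈ B) ⊂
      V.filter fun x => (g x, x) ∈ insert (u, v) (B.erase (u, w)) := by
    refine ssubset_iff_of_subset (monotone_filter_right _ fun x _ hx => ?_) |>.2
      ⟨v, mem_filter.2 ⟨hv, hgv ▸ mem_insert_self _ _⟩,
        fun h => huv (hgv ▸ (mem_filter.1 h).2)⟩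
    refine mem_insert_of_mem (mem_erase.2 ⟨fun h => hgw ?_, hx⟩)
    obtain ⟨h1, rfl⟩ := Prod.ext_iff.1 h
    exact h1
  rw [matchingPotential, matchingPotential, hcard]
  have := card_lt_card hmatched
  omega

end Branchings

section Extremal

variable {ρ : Type*} [DecidableEq ρ] {V : Finset (Finset ρ)}

theorem exists_optimal_maximal_branching_covering_nonMinimalSets {g : Finset ρ → Finset ρ}
    (hg : ∀ v ∈ nonMinimalSets V, g v ∈ V ∧ g v ⊂ v)
    (hinj : Set.InjOn g (nonMinimalSets V)) :
    ∃ B, IsBranching V B ∧ uncov V B = beta V ∧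
      (∀ v ∈ V, (∃ w ∈ V, v ⊂ w) → ∃ p ∈ B, p.1 = v) ∧
      ∀ v ∈ nonMinimalSets V, ∃ p ∈ B, p.2 = v := by
  set optimal := (V ×ˢ V).powerset.filter fun B => IsBranching V B ∧ uncov V B = beta V
  have mem_optimal : ∀ {B}, IsBranching V B → uncov V B ≤ beta V → B ∈ optimal :=
    fun hB hle =>
      mem_filter.2 ⟨mem_powerset.2 hB.subset_product, hB, hle.antisymm (beta_le_uncov hB)⟩
  obtain ⟨B, hBopt, hBmax⟩ := optimal.exists_max_image (matchingPotential V g) <| by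
    obtain ⟨B, hB, hBβ⟩ := exists_isBranching_uncov_eq_beta V
    exact ⟨B, mem_optimal hB hBβ.le⟩
  obtain ⟨hB, hBβ⟩ := (mem_filter.1 hBopt).2
  have hout : ∀ v ∈ V, (∃ w ∈ V, v ⊂ w) → ∃ p ∈ B, p.1 = v := by
    by_contra! ⟨v, hv, ⟨w, hw, hvw⟩, hfree⟩
    have hB' := hB.insert_of_forall_fst_ne hv hw hvw hfree
    exact (matchingPotential_lt_insert fun h => hfree _ h rfl).not_ge <|
      hBmax _ (mem_optimal hB' ((uncov_anti V (subset_insert _ _)).trans hBβ.le))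
  refine ⟨B, hB, hBβ, hout, ?_⟩
  by_contra! ⟨v, hv, hleaf⟩
  obtain ⟨hgvV, hgv⟩ := hg v hv
  obtain ⟨⟨_, w⟩, huw, rfl⟩ := hout (g v) hgvV ⟨v, (mem_filter.1 hv).1, hgv⟩
  obtain ⟨-, hwV, hgw⟩ := hB.1 _ huw
  have hgw_ne : g w ≠ g v := fun h =>
    hleaf _ huw (hinj (mem_filter.2 ⟨hwV, _, hgvV, hgw⟩) hv h)
  have hB' := hB.reroute huw (mem_filter.1 hv).1 hgv
  exact (matchingPotential_lt_reroute huw (fun h => hleaf _ h rfl) (mem_filter.1 hv).1 rfl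
    hgw_ne).not_ge <| hBmax _ <| mem_optimal hB' <|
      (uncov_reroute_le hwV (mem_filter.1 hv).1 hgv.subset hleaf).trans hBβ.le

end Extremal

/-- If the set of minimal elements of the containment digraph `D_M` is its
only maximum antichain, then there exists a maximal optimal branching of
`D_M` whose set of leaves is exactly the set of minimal elements. -/
theorem stmt13 {m n : ℕ} (M : Matrix (Fin m) (Fin n) Bool)
    (huniq : ∀ S ⊆ suppFamily M, IsAntichainFam S →
        S ≠ (suppFamily M).filter (fun v => ∀ u ∈ suppFamily M, ¬ u ⊂ v) →
        S.card <
          ((suppFamily M).filter fun v => ∀ u ∈ suppFamily M, ¬ u ⊂ v).card) :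
    ∃ B : Finset (Finset (Fin m) × Finset (Fin m)),
      IsBranching (suppFamily M) B ∧
      (∀ v ∈ suppFamily M, (∃ w ∈ suppFamily M, v ⊂ w) → ∃ p ∈ B, p.1 = v) ∧
      (∀ B', IsBranching (suppFamily M) B' →
          uncov (suppFamily M) B ≤ uncov (suppFamily M) B') ∧
      (suppFamily M).filter (fun v => ∀ p ∈ B, p.2 ≠ v) =
        (suppFamily M).filter (fun v => ∀ u ∈ suppFamily M, ¬ u ⊂ v) := by
  -- The statement's filters use the `Fintype (Finset (Fin m))` instance to decide `∀ u ∈ V, _`,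
  -- so they match `minimalSets` and `leaves_eq_minimalSets` only up to `Decidable` instances.
  have hmin : (suppFamily M).filter (fun v => ∀ u ∈ suppFamily M, ¬ u ⊂ v) =
      minimalSets (suppFamily M) := by
    ext; simp [minimalSets]
  have hmax : ∀ A ⊆ suppFamily M, IsAntichainFam A →
      A.card ≤ (minimalSets (suppFamily M)).card := fun A hA hanti => by
    rw [hmin] at huniq
    by_cases h : A = minimalSets (suppFamily M)
    · exact (congrArg card h).le
    · exact (huniq A hA hanti h).le
  obtain ⟨g, hg, hinj⟩ := exists_injOn_ssubset_of_forall_card_le hmax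
  obtain ⟨B, hB, hBβ, hout, hin⟩ :=
    exists_optimal_maximal_branching_covering_nonMinimalSets hg hinj
  refine ⟨B, hB, hout, fun B' hB' => hBβ ▸ beta_le_uncov hB', ?_⟩
  rw [hmin, ← leaves_eq_minimalSets hB hin]
  congr
end
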